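/- Let n ∈ ℕ, let Ω ⊆ ℝⁿ be a bounded open set, and let s ∈ (0,1]. For f : ℝⁿ → ℂ define, with values in [0,∞]: N_C(f) := ⨆_{x ∈ Ω} ‖f x‖ₑ; N_{H,σ}(f) := N_C(f) + ⨆ {(x,y) : x,y ∈ Ω, x ≠ y} ‖f x − f y‖ₑ / ‖x − y‖ₑ^σ; and the Zygmund quantity N_{Z,s}(f) := N_{H,s/2}(f) + ⨆ {(x,h) : h ≠ 0, x ∈ Ω, x + h ∈ Ω, x + 2h ∈ Ω} ‖f (x + 2h) − 2 f (x + h) + f x‖ₑ / ‖h‖ₑ^s. Then there exists a constant C > 0, depending only on s, such that for all f, g : ℝⁿ → ℂ one has N_{Z,s}(f · g) ≤ C · N_{Z,s}(f) · N_{Z,s}(g) (an inequality in the extended nonnegative reals). -/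

import Mathlib

open scoped ENNReal NNReal

/-- The sup norm `N_C(f) = ⨆_{x ∈ Ω} ‖f x‖`, valued in `[0,∞]`. -/
noncomputable def NC {n : ℕ} (Ω : Set (EuclideanSpace ℝ (Fin n)))
    (f : EuclideanSpace ℝ (Fin n) → ℂ) : ℝ≥0∞ :=
  ⨆ x ∈ Ω, (‖f x‖₊ : ℝ≥0∞)

/-- The Hölder quantity
`N_{H,σ}(f) = N_C(f) + ⨆_{x ≠ y ∈ Ω} ‖f x − f y‖ / ‖x − y‖^σ`, valued in `[0,∞]`. -/
noncomputable def NH {n : ℕ} (Ω : Set (EuclideanSpace ℝ (Fin n))) (σ : ℝ)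
    (f : EuclideanSpace ℝ (Fin n) → ℂ) : ℝ≥0∞ :=
  NC Ω f + ⨆ x ∈ Ω, ⨆ y ∈ Ω, ⨆ _ : x ≠ y,
    (‖f x - f y‖₊ : ℝ≥0∞) / (‖x - y‖₊ : ℝ≥0∞) ^ σ

/-- The Zygmund quantity
`N_{Z,s}(f) = N_{H,s/2}(f) + ⨆ ‖f(x+2h) − 2 f(x+h) + f x‖ / ‖h‖^s`, the supremum being over
`h ≠ 0` and `x` with `x, x+h, x+2h ∈ Ω`; valued in `[0,∞]`. -/
noncomputable def NZ {n : ℕ} (Ω : Set (EuclideanSpace ℝ (Fin n))) (s : ℝ)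
    (f : EuclideanSpace ℝ (Fin n) → ℂ) : ℝ≥0∞ :=
  NH Ω (s / 2) f +
    ⨆ x : EuclideanSpace ℝ (Fin n), ⨆ h : EuclideanSpace ℝ (Fin n),
      ⨆ _ : h ≠ 0, ⨆ _ : x ∈ Ω, ⨆ _ : x + h ∈ Ω, ⨆ _ : x + (2 : ℝ) • h ∈ Ω,
        (‖f (x + (2 : ℝ) • h) - 2 * f (x + h) + f x‖₊ : ℝ≥0∞) / (‖h‖₊ : ℝ≥0∞) ^ s

/-!
The discrete Leibniz rules
`Δ_h(fg)(x) = f(x) Δ_h g(x) + Δ_h f(x) g(x+h)` and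
`Δ²_h(fg)(x) = f(x+2h) Δ²_h g(x) + Δ²_h f(x) g(x) + 2 Δ_h f(x+h) Δ_h g(x)`
bound the sup, Hölder and second-difference parts of `fg` by products of those of `f` and `g`.
The only term that is not of the form (sup norm) × (seminorm) is the cross term
`2 Δ_h f Δ_h g`; it is at most `2 ‖f‖_{C^{s/2}} ‖g‖_{C^{s/2}} |h|^{s/2} |h|^{s/2}`, which is why
the Zygmund norm carries the `C^{0,s/2}` norm. Summing gives the constant `1 + 2 + 4 = 7`.
-/

section NormedRing

variable {R : Type*} [NormedRing R]

theorem nnnorm_mul_sub_mul_le (a b p q : R) :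
    ‖a * p - b * q‖₊ ≤ ‖a‖₊ * ‖p - q‖₊ + ‖a - b‖₊ * ‖q‖₊ :=
  calc ‖a * p - b * q‖₊ = ‖a * (p - q) + (a - b) * q‖₊ := by noncomm_ring
    _ ≤ ‖a‖₊ * ‖p - q‖₊ + ‖a - b‖₊ * ‖q‖₊ :=
      (nnnorm_add_le _ _).trans (add_le_add (nnnorm_mul_le _ _) (nnnorm_mul_le _ _))

theorem nnnorm_mul_sub_two_mul_add_mul_le (a b c p q r : R) :
    ‖c * r - 2 * (b * q) + a * p‖₊ ≤
      ‖c‖₊ * ‖r - 2 * q + p‖₊ + ‖c - 2 * b + a‖₊ * ‖p‖₊ + 2 * (‖c - b‖₊ * ‖q - p‖₊) := by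
  have hcross : ‖(c - b) * (q - p) + (c - b) * (q - p)‖₊ ≤ 2 * (‖c - b‖₊ * ‖q - p‖₊) :=
    calc _ ≤ ‖(c - b) * (q - p)‖₊ + ‖(c - b) * (q - p)‖₊ := nnnorm_add_le _ _
      _ ≤ 2 * (‖c - b‖₊ * ‖q - p‖₊) := by
        rw [← two_mul]; gcongr; exact nnnorm_mul_le _ _
  calc ‖c * r - 2 * (b * q) + a * p‖₊
      = ‖c * (r - 2 * q + p) + (c - 2 * b + a) * p
          + ((c - b) * (q - p) + (c - b) * (q - p))‖₊ := by noncomm_ring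
    _ ≤ ‖c * (r - 2 * q + p)‖₊ + ‖(c - 2 * b + a) * p‖₊
          + ‖(c - b) * (q - p) + (c - b) * (q - p)‖₊ :=
      (nnnorm_add_le _ _).trans (add_le_add (nnnorm_add_le _ _) le_rfl)
    _ ≤ _ := add_le_add (add_le_add (nnnorm_mul_le _ _) (nnnorm_mul_le _ _)) hcross

end NormedRing

theorem le_mul_nnnorm_rpow_of_div_le {E : Type*} [NormedAddCommGroup E] {v : E} (hv : v ≠ 0)
    {t : ℝ} {a S : ℝ≥0∞} (h : a / (‖v‖₊ : ℝ≥0∞) ^ t ≤ S) : a ≤ S * (‖v‖₊ : ℝ≥0∞) ^ t := by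
  have hv' : (‖v‖₊ : ℝ≥0∞) ≠ 0 := by simpa using hv
  exact (ENNReal.div_le_iff (ENNReal.rpow_pos (pos_iff_ne_zero.2 hv') ENNReal.coe_ne_top).ne'
    (ENNReal.rpow_ne_top_of_ne_zero hv' ENNReal.coe_ne_top)).1 h

section Zygmund

variable {n : ℕ} (Ω : Set (EuclideanSpace ℝ (Fin n)))

noncomputable def holderSeminorm (σ : ℝ) (f : EuclideanSpace ℝ (Fin n) → ℂ) : ℝ≥0∞ :=
  ⨆ x ∈ Ω, ⨆ y ∈ Ω, ⨆ _ : x ≠ y, (‖f x - f y‖₊ : ℝ≥0∞) / (‖x - y‖₊ : ℝ≥0∞) ^ σ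

noncomputable def zygmundSeminorm (s : ℝ) (f : EuclideanSpace ℝ (Fin n) → ℂ) : ℝ≥0∞ :=
  ⨆ x : EuclideanSpace ℝ (Fin n), ⨆ h : EuclideanSpace ℝ (Fin n),
    ⨆ _ : h ≠ 0, ⨆ _ : x ∈ Ω, ⨆ _ : x + h ∈ Ω, ⨆ _ : x + (2 : ℝ) • h ∈ Ω,
      (‖f (x + (2 : ℝ) • h) - 2 * f (x + h) + f x‖₊ : ℝ≥0∞) / (‖h‖₊ : ℝ≥0∞) ^ s

theorem NZ_eq (s : ℝ) (f : EuclideanSpace ℝ (Fin n) → ℂ) :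
    NZ Ω s f = NC Ω f + holderSeminorm Ω (s / 2) f + zygmundSeminorm Ω s f :=
  rfl

variable {Ω}

theorem nnnorm_le_NC (f : EuclideanSpace ℝ (Fin n) → ℂ) {x : EuclideanSpace ℝ (Fin n)}
    (hx : x ∈ Ω) : (‖f x‖₊ : ℝ≥0∞) ≤ NC Ω f :=
  le_iSup₂ (f := fun x _ => (‖f x‖₊ : ℝ≥0∞)) x hx

theorem nnnorm_sub_le_holderSeminorm_mul (σ : ℝ) (f : EuclideanSpace ℝ (Fin n) → ℂ)
    {x y : EuclideanSpace ℝ (Fin n)} (hx : x ∈ Ω) (hy : y ∈ Ω) :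
    (‖f x - f y‖₊ : ℝ≥0∞) ≤ holderSeminorm Ω σ f * (‖x - y‖₊ : ℝ≥0∞) ^ σ := by
  rcases eq_or_ne x y with rfl | hxy
  · simp
  · exact le_mul_nnnorm_rpow_of_div_le (sub_ne_zero.2 hxy)
      (le_iSup₂_of_le x hx (le_iSup₂_of_le y hy (le_iSup_of_le hxy le_rfl)))

theorem nnnorm_secondDiff_le_zygmundSeminorm_mul (s : ℝ) (f : EuclideanSpace ℝ (Fin n) → ℂ)
    {x h : EuclideanSpace ℝ (Fin n)} (h0 : h ≠ 0) (hx : x ∈ Ω) (hx₁ : x + h ∈ Ω)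
    (hx₂ : x + (2 : ℝ) • h ∈ Ω) :
    (‖f (x + (2 : ℝ) • h) - 2 * f (x + h) + f x‖₊ : ℝ≥0∞) ≤
      zygmundSeminorm Ω s f * (‖h‖₊ : ℝ≥0∞) ^ s :=
  le_mul_nnnorm_rpow_of_div_le h0 <| le_iSup_of_le x <| le_iSup_of_le h <| le_iSup_of_le h0 <|
    le_iSup_of_le hx <| le_iSup_of_le hx₁ <| le_iSup_of_le hx₂ le_rfl

variable (f g : EuclideanSpace ℝ (Fin n) → ℂ)

theorem NC_mul_le : NC Ω (fun x => f x * g x) ≤ NC Ω f * NC Ω g :=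
  iSup₂_le fun x hx => by
    rw [nnnorm_mul, ENNReal.coe_mul]
    exact mul_le_mul' (nnnorm_le_NC f hx) (nnnorm_le_NC g hx)

theorem holderSeminorm_mul_le (σ : ℝ) :
    holderSeminorm Ω σ (fun x => f x * g x) ≤
      NC Ω f * holderSeminorm Ω σ g + holderSeminorm Ω σ f * NC Ω g := by
  refine iSup₂_le fun x hx => iSup₂_le fun y hy => iSup_le fun _ => ENNReal.div_le_of_le_mul ?_
  calc (‖f x * g x - f y * g y‖₊ : ℝ≥0∞)
      ≤ ‖f x‖₊ * ‖g x - g y‖₊ + ‖f x - f y‖₊ * ‖g y‖₊ := by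
        exact_mod_cast nnnorm_mul_sub_mul_le (f x) (f y) (g x) (g y)
    _ ≤ NC Ω f * (holderSeminorm Ω σ g * (‖x - y‖₊ : ℝ≥0∞) ^ σ)
          + holderSeminorm Ω σ f * (‖x - y‖₊ : ℝ≥0∞) ^ σ * NC Ω g := by
      gcongr
      exacts [nnnorm_le_NC f hx, nnnorm_sub_le_holderSeminorm_mul σ g hx hy,
        nnnorm_sub_le_holderSeminorm_mul σ f hx hy, nnnorm_le_NC g hy]
    _ = _ := by ring

theorem zygmundSeminorm_mul_le (s : ℝ) :
    zygmundSeminorm Ω s (fun x => f x * g x) ≤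
      NC Ω f * zygmundSeminorm Ω s g + zygmundSeminorm Ω s f * NC Ω g
        + 2 * (holderSeminorm Ω (s / 2) f * holderSeminorm Ω (s / 2) g) := by
  refine iSup_le fun x => iSup_le fun h => iSup_le fun h0 => iSup_le fun hx =>
    iSup_le fun hx₁ => iSup_le fun hx₂ => ENNReal.div_le_of_le_mul ?_
  have hh : (‖h‖₊ : ℝ≥0∞) ≠ 0 := by simpa using h0
  have half_sq : (‖h‖₊ : ℝ≥0∞) ^ (s / 2) * (‖h‖₊ : ℝ≥0∞) ^ (s / 2) = (‖h‖₊ : ℝ≥0∞) ^ s := by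
    rw [← ENNReal.rpow_add _ _ hh ENNReal.coe_ne_top, add_halves]
  have hshift : (x + (2 : ℝ) • h) - (x + h) = h := by rw [two_smul]; abel
  have hf := nnnorm_sub_le_holderSeminorm_mul (s / 2) f hx₂ hx₁
  have hg := nnnorm_sub_le_holderSeminorm_mul (s / 2) g hx₁ hx
  rw [hshift] at hf
  rw [add_sub_cancel_left] at hg
  calc (‖f (x + (2 : ℝ) • h) * g (x + (2 : ℝ) • h) - 2 * (f (x + h) * g (x + h))
          + f x * g x‖₊ : ℝ≥0∞)
      ≤ ‖f (x + (2 : ℝ) • h)‖₊ * ‖g (x + (2 : ℝ) • h) - 2 * g (x + h) + g x‖₊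
          + ‖f (x + (2 : ℝ) • h) - 2 * f (x + h) + f x‖₊ * ‖g x‖₊
          + 2 * (‖f (x + (2 : ℝ) • h) - f (x + h)‖₊ * ‖g (x + h) - g x‖₊) := by
        exact_mod_cast nnnorm_mul_sub_two_mul_add_mul_le _ _ _ _ _ _
    _ ≤ NC Ω f * (zygmundSeminorm Ω s g * (‖h‖₊ : ℝ≥0∞) ^ s)
          + zygmundSeminorm Ω s f * (‖h‖₊ : ℝ≥0∞) ^ s * NC Ω g
          + 2 * (holderSeminorm Ω (s / 2) f * (‖h‖₊ : ℝ≥0∞) ^ (s / 2)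
            * (holderSeminorm Ω (s / 2) g * (‖h‖₊ : ℝ≥0∞) ^ (s / 2))) := by
      gcongr
      exacts [nnnorm_le_NC f hx₂, nnnorm_secondDiff_le_zygmundSeminorm_mul s g h0 hx hx₁ hx₂,
        nnnorm_secondDiff_le_zygmundSeminorm_mul s f h0 hx hx₁ hx₂, nnnorm_le_NC g hx]
    _ = _ := by rw [← half_sq]; ring

theorem NZ_mul_le (s : ℝ) : NZ Ω s (fun x => f x * g x) ≤ 7 * NZ Ω s f * NZ Ω s g := by
  have hC : ∀ u, NC Ω u ≤ NZ Ω s u := fun u => by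
    rw [NZ_eq]; exact le_add_right le_self_add
  have hH : ∀ u, holderSeminorm Ω (s / 2) u ≤ NZ Ω s u := fun u => by
    rw [NZ_eq]; exact le_add_right le_add_self
  have hZ : ∀ u, zygmundSeminorm Ω s u ≤ NZ Ω s u := fun u => by
    rw [NZ_eq]; exact le_add_self
  calc NZ Ω s (fun x => f x * g x)
      ≤ NC Ω f * NC Ω g
          + (NC Ω f * holderSeminorm Ω (s / 2) g + holderSeminorm Ω (s / 2) f * NC Ω g)
          + (NC Ω f * zygmundSeminorm Ω s g + zygmundSeminorm Ω s f * NC Ω g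
            + 2 * (holderSeminorm Ω (s / 2) f * holderSeminorm Ω (s / 2) g)) := by
        rw [NZ_eq]
        gcongr
        exacts [NC_mul_le f g, holderSeminorm_mul_le f g _, zygmundSeminorm_mul_le f g s]
    _ ≤ NZ Ω s f * NZ Ω s g + (NZ Ω s f * NZ Ω s g + NZ Ω s f * NZ Ω s g)
          + (NZ Ω s f * NZ Ω s g + NZ Ω s f * NZ Ω s g + 2 * (NZ Ω s f * NZ Ω s g)) := by
        gcongr <;> apply_assumption
    _ = 7 * NZ Ω s f * NZ Ω s g := by ring

end Zygmund

theorem zygmund_algebra_general (s : ℝ) :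
    ∃ C : ℝ, 0 < C ∧
      ∀ (n : ℕ) (Ω : Set (EuclideanSpace ℝ (Fin n))),
        Bornology.IsBounded Ω → IsOpen Ω →
        ∀ f g : EuclideanSpace ℝ (Fin n) → ℂ,
          NZ Ω s (fun x => f x * g x) ≤ ENNReal.ofReal C * NZ Ω s f * NZ Ω s g :=
  ⟨7, by norm_num, fun _ _ _ _ f g => by simpa using NZ_mul_le f g s⟩

/-- The Zygmund space `𝒞^s(Ω)` is an algebra.
For `s ∈ (0,1]` there is a constant `C > 0`, depending only on `s`, such that for every
`n`, every bounded open `Ω ⊆ ℝⁿ` and all `f, g : ℝⁿ → ℂ`,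
`N_{Z,s}(f·g) ≤ C · N_{Z,s}(f) · N_{Z,s}(g)` in `[0,∞]`. -/
theorem zygmund_algebra (s : ℝ) (hs0 : 0 < s) (hs1 : s ≤ 1) :
    ∃ C : ℝ, 0 < C ∧
      ∀ (n : ℕ) (Ω : Set (EuclideanSpace ℝ (Fin n))),
        Bornology.IsBounded Ω → IsOpen Ω →
        ∀ f g : EuclideanSpace ℝ (Fin n) → ℂ,
          NZ Ω s (fun x => f x * g x) ≤ ENNReal.ofReal C * NZ Ω s f * NZ Ω s g :=
  zygmund_algebra_general s
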